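/- Let g be a finite-dimensional Lie algebra over k whose dual g* carries a Lie algebra bracket [·,·]*. Suppose the Lie bialgebra is a coboundary one; concretely, suppose there is a k-linear map ρ : g* → g such that ad*_ξ(x) = ρ(ad*_x ξ) + ⁅x, ρ(ξ)⁆ for all x ∈ g and ξ ∈ g*. Define S : g* → End(g*) by S(ξ) = −ad*_{ρ(ξ)}. Then S satisfies the Atiyah cocycle equation: −ad*_x ∘ S(ξ) + S(ξ) ∘ ad*_x + S(ad*_x ξ) + ad*_{ad*_ξ x} = 0 for all x ∈ g and ξ ∈ g*. (In particular, the Atiyah class of the Lie pair (g ⋈ g*, g) vanishes.) -/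

import Mathlib

open Module

variable (k : Type*) [Field k] (g : Type*) [LieRing g] [LieAlgebra k g]

/-- `adStar k g x` is the dual (transpose) of `ad x : g →ₗ[k] g`,
so `adStar k g x ξ y = ξ ⁅x, y⁆`. -/
noncomputable def adStar : g →ₗ[k] Module.End k (Module.Dual k g) :=
  (Module.Dual.transpose (R := k)) ∘ₗ (LieAlgebra.ad k g : g →ₗ[k] Module.End k g)

/-- Given `ρ : g* → g`, the map `S(ξ) = −ad*_{ρ(ξ)} = ad*_{−ρ(ξ)}`. -/
noncomputable def coboundaryS (ρ : Module.Dual k g →ₗ[k] g) :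
    Module.Dual k g →ₗ[k] Module.End k (Module.Dual k g) :=
  (adStar k g) ∘ₗ (-ρ)

theorem adStar_apply_apply (x : g) (ξ : Dual k g) (y : g) : adStar k g x ξ y = ξ ⁅x, y⁆ := rfl

theorem coboundaryS_apply (ρ : Dual k g →ₗ[k] g) (ξ : Dual k g) :
    coboundaryS k g ρ ξ = -adStar k g (ρ ξ) := by
  simp [coboundaryS]

/-- Transposition reverses composition, so `ad*` is an antihomomorphism of Lie algebras. -/
theorem adStar_lie (x y : g) :
    adStar k g ⁅x, y⁆ = adStar k g y * adStar k g x - adStar k g x * adStar k g y := by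
  ext ξ z
  simp only [adStar_apply_apply, Module.End.mul_apply, LinearMap.sub_apply, lie_lie, map_sub]

theorem coboundary_S_solves_atiyah_equation
    (astar : Module.Dual k g →ₗ[k] g →ₗ[k] g)
    (ρ : Module.Dual k g →ₗ[k] g)
    (hρ : ∀ (x : g) (ξ : Module.Dual k g),
      astar ξ x = ρ (adStar k g x ξ) + ⁅x, ρ ξ⁆) :
    ∀ (x : g) (ξ : Module.Dual k g),
      -(adStar k g x * coboundaryS k g ρ ξ) + coboundaryS k g ρ ξ * adStar k g x
        + coboundaryS k g ρ (adStar k g x ξ) + adStar k g (astar ξ x) = 0 := by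
  intro x ξ
  -- the `S (ad*_x ξ)` term cancels against `ρ (ad*_x ξ)`; the rest is `ad*` of the Jacobi identity
  rw [hρ, map_add, adStar_lie, coboundaryS_apply, coboundaryS_apply]
  simp only [Module.End.mul_eq_comp, LinearMap.comp_neg, LinearMap.neg_comp]
  abel
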